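/- The subsemigroup of G generated by a and b is free of rank 2: if u and v are two finite sequences over the two-letter alphabet {a, b} whose products in G are equal, then u = v as sequences. -/

import Mathlib

-- The generators `a` and `b` of the iterated monodromy group of `z^2-1`,
-- as functions on binary words (`false` = x = left, `true` = y = right),
-- defined by mutual recursion.
mutual
def aFun : List Bool → List Bool
  | [] => []
  | false :: w => true :: bFun w
  | true :: w => false :: w

def bFun : List Bool → List Bool
  | [] => []
  | false :: w => false :: aFun w
  | true :: w => true :: w
end

-- The inverses of `aFun`/`bFun`.
mutual
def aInv : List Bool → List Bool
  | [] => []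
  | true :: w => false :: bInv w
  | false :: w => true :: w

def bInv : List Bool → List Bool
  | [] => []
  | false :: w => false :: aInv w
  | true :: w => true :: w
end

mutual
theorem aFun_aInv : ∀ w, aFun (aInv w) = w
  | [] => rfl
  | true :: w => by simp [aInv, aFun, bFun_bInv w]
  | false :: w => by simp [aInv, aFun]

theorem bFun_bInv : ∀ w, bFun (bInv w) = w
  | [] => rfl
  | false :: w => by simp [bInv, bFun, aFun_aInv w]
  | true :: w => by simp [bInv, bFun]
end

mutual
theorem aInv_aFun : ∀ w, aInv (aFun w) = w
  | [] => rfl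
  | false :: w => by simp [aFun, aInv, bInv_bFun w]
  | true :: w => by simp [aFun, aInv]

theorem bInv_bFun : ∀ w, bInv (bFun w) = w
  | [] => rfl
  | false :: w => by simp [bFun, bInv, aInv_aFun w]
  | true :: w => by simp [bFun, bInv]
end

/-- `a` as a permutation of the set of binary words. -/
def aPerm : Equiv.Perm (List Bool) := ⟨aFun, aInv, aInv_aFun, aFun_aInv⟩
/-- `b` as a permutation of the set of binary words. -/
def bPerm : Equiv.Perm (List Bool) := ⟨bFun, bInv, bInv_bFun, bFun_bInv⟩

mutual
theorem aFun_length : ∀ w, (aFun w).length = w.length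
  | [] => rfl
  | false :: w => by simp [aFun, bFun_length w]
  | true :: w => by simp [aFun]

theorem bFun_length : ∀ w, (bFun w).length = w.length
  | [] => rfl
  | false :: w => by simp [bFun, aFun_length w]
  | true :: w => by simp [bFun]
end

mutual
theorem aFun_prefix : ∀ u v, u <+: v → aFun u <+: aFun v
  | [], v, _ => by simp [aFun]
  | false :: u, false :: v, h => by
      simp only [List.cons_prefix_cons] at h
      simpa [aFun, List.cons_prefix_cons] using bFun_prefix u v h.2
  | true :: u, true :: v, h => by
      simp only [List.cons_prefix_cons] at h
      simpa [aFun, List.cons_prefix_cons] using h.2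
  | false :: u, true :: v, h => by simp [List.cons_prefix_cons] at h
  | true :: u, false :: v, h => by simp [List.cons_prefix_cons] at h
  | _ :: u, [], h => by simp at h

theorem bFun_prefix : ∀ u v, u <+: v → bFun u <+: bFun v
  | [], v, _ => by simp [bFun]
  | false :: u, false :: v, h => by
      simp only [List.cons_prefix_cons] at h
      simpa [bFun, List.cons_prefix_cons] using aFun_prefix u v h.2
  | true :: u, true :: v, h => by
      simp only [List.cons_prefix_cons] at h
      simpa [bFun, List.cons_prefix_cons] using h.2
  | false :: u, true :: v, h => by simp [List.cons_prefix_cons] at h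
  | true :: u, false :: v, h => by simp [List.cons_prefix_cons] at h
  | _ :: u, [], h => by simp at h
end

/-- The group of automorphisms of the binary rooted tree: bijections of the set of
binary words preserving word length and the prefix relation. -/
def treeAut : Subgroup (Equiv.Perm (List Bool)) where
  carrier := {f | (∀ w, (f w).length = w.length) ∧ ∀ u v : List Bool, u <+: v → f u <+: f v}
  one_mem' := ⟨fun _ => rfl, fun _ _ h => h⟩
  mul_mem' := by
    rintro f g ⟨hf1, hf2⟩ ⟨hg1, hg2⟩
    exact ⟨fun w => (hf1 _).trans (hg1 w), fun u v h => hf2 _ _ (hg2 _ _ h)⟩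
  inv_mem' := by
    rintro f ⟨hf1, hf2⟩
    constructor
    · intro w
      have := hf1 (f⁻¹ w)
      simpa using this.symm
    · intro u v h
      have hlen : (f⁻¹ u).length ≤ (f⁻¹ v).length := by
        have h1 : (f⁻¹ u).length = u.length := by have := hf1 (f⁻¹ u); simpa using this.symm
        have h2 : (f⁻¹ v).length = v.length := by have := hf1 (f⁻¹ v); simpa using this.symm
        rw [h1, h2]; exact h.length_le
      set p := (f⁻¹ v).take (f⁻¹ u).length with hp
      have hpv : p <+: f⁻¹ v := List.take_prefix _ _
      have hplen : p.length = (f⁻¹ u).length := by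
        simpa [hp, List.length_take] using hlen
      have hfp : f p <+: v := by
        have := hf2 _ _ hpv
        simpa using this
      have hfplen : (f p).length = u.length := by
        rw [hf1 p, hplen]
        have := hf1 (f⁻¹ u); simpa using this.symm
      have : f p = u := by
        rcases List.prefix_or_prefix_of_prefix hfp h with h' | h'
        · exact h'.eq_of_length hfplen
        · exact (h'.eq_of_length hfplen.symm).symm
      have : p = f⁻¹ u := by
        have := congrArg (f⁻¹ : Equiv.Perm (List Bool)) this
        simpa using this
      rw [← this]; exact hpv

/-- The generator `a` as a tree automorphism. -/
def A : treeAut := ⟨aPerm, aFun_length, aFun_prefix⟩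
/-- The generator `b` as a tree automorphism. -/
def B : treeAut := ⟨bPerm, bFun_length, bFun_prefix⟩

/-- The iterated monodromy group of `z ↦ z² - 1`: the subgroup of the automorphism
group of the binary rooted tree generated by `a` and `b`. -/
def G : Subgroup treeAut := Subgroup.closure {A, B}

/-- Apply a tree automorphism to a binary word. -/
def app (g : treeAut) (w : List Bool) : List Bool := g.val w


/-! ### Auxiliary development for freeness -/

/-- Apply a word (list of letters, `false` = a, `true` = b) to a binary word,
letters applied in list order (head first). -/
def Gw : List Bool → List Bool → List Bool
  | [], w => w
  | false :: r, w => Gw r (aFun w)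
  | true :: r, w => Gw r (bFun w)

/-- Parity of the number of `a`'s in the word. -/
def paR : List Bool → Bool
  | [] => false
  | false :: r => !(paR r)
  | true :: r => paR r

/-- The two sections (at x and at y) of the product of a word, again as words
(in the same "head-applied-first" encoding). -/
def Sec : List Bool → List Bool × List Bool
  | [] => ([], [])
  | false :: r => (true :: (Sec r).2, (Sec r).1)
  | true :: r => (false :: (Sec r).1, (Sec r).2)

theorem Gw_nil : ∀ r, Gw r [] = []
  | [] => rfl
  | false :: r => by simp [Gw, aFun, Gw_nil r]
  | true :: r => by simp [Gw, bFun, Gw_nil r]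

theorem Gw_append : ∀ r1 r2 w, Gw (r1 ++ r2) w = Gw r2 (Gw r1 w)
  | [], r2, w => rfl
  | false :: r, r2, w => by simp [Gw, Gw_append r r2]
  | true :: r, r2, w => by simp [Gw, Gw_append r r2]

theorem sec_spec : ∀ r c w,
    Gw r (c :: w) = (xor (paR r) c) :: Gw (cond c (Sec r).2 (Sec r).1) w
  | [], c, w => by cases c <;> simp [Gw, paR, Sec]
  | false :: r, false, w => by
      have h1 := sec_spec r true (bFun w)
      simp only [Gw, aFun, Sec, paR, cond] at h1 ⊢
      rw [h1]
      all_goals (cases paR r <;> rfl)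
  | false :: r, true, w => by
      have h1 := sec_spec r false w
      simp only [Gw, aFun, Sec, paR, cond] at h1 ⊢
      rw [h1]
      all_goals (cases paR r <;> rfl)
  | true :: r, false, w => by
      have h1 := sec_spec r false (aFun w)
      simp only [Gw, bFun, Sec, paR, cond] at h1 ⊢
      rw [h1]
      all_goals (cases paR r <;> rfl)
  | true :: r, true, w => by
      have h1 := sec_spec r true w
      simp only [Gw, bFun, Sec, paR, cond] at h1 ⊢
      rw [h1]
      all_goals (cases paR r <;> rfl)

theorem eq_pa {r1 r2 : List Bool} (h : ∀ w, Gw r1 w = Gw r2 w) : paR r1 = paR r2 := by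
  have := h [false]
  rw [sec_spec, sec_spec] at this
  simpa using List.head_eq_of_cons_eq this

theorem eq_sec1 {r1 r2 : List Bool} (h : ∀ w, Gw r1 w = Gw r2 w) :
    ∀ w, Gw (Sec r1).1 w = Gw (Sec r2).1 w := by
  intro w
  have := h (false :: w)
  rw [sec_spec, sec_spec] at this
  simpa using List.tail_eq_of_cons_eq this

theorem eq_sec2 {r1 r2 : List Bool} (h : ∀ w, Gw r1 w = Gw r2 w) :
    ∀ w, Gw (Sec r1).2 w = Gw (Sec r2).2 w := by
  intro w
  have := h (true :: w)
  rw [sec_spec, sec_spec] at this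
  simpa using List.tail_eq_of_cons_eq this

theorem Sec_len : ∀ r : List Bool, ((Sec r).1).length + ((Sec r).2).length = r.length
  | [] => rfl
  | false :: r => by
      have := Sec_len r
      simp only [Sec, List.length_cons]
      omega
  | true :: r => by
      have := Sec_len r
      simp only [Sec, List.length_cons]
      omega

theorem Sec1_nil_iff : ∀ r : List Bool, (Sec r).1 = [] ↔ r = []
  | [] => by simp [Sec]
  | false :: r => by simp [Sec]
  | true :: r => by simp [Sec]

theorem Qchar : ∀ r : List Bool, (Sec r).2 = [] →
    ∃ j, r = List.replicate j true ∨ r = List.replicate j true ++ [false]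
  | [], _ => ⟨0, Or.inl rfl⟩
  | false :: r, h => by
      simp only [Sec] at h
      have := (Sec1_nil_iff r).mp h
      subst this
      exact ⟨0, Or.inr rfl⟩
  | true :: r, h => by
      simp only [Sec] at h
      obtain ⟨j, hj | hj⟩ := Qchar r h
      · exact ⟨j + 1, Or.inl (by rw [hj]; rfl)⟩
      · exact ⟨j + 1, Or.inr (by rw [hj]; rfl)⟩

theorem pa_rep_true : ∀ j, paR (List.replicate j true) = false
  | 0 => rfl
  | j + 1 => by simpa [List.replicate, paR] using pa_rep_true j

theorem pa_rep_true_f : ∀ j, paR (List.replicate j true ++ [false]) = true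
  | 0 => rfl
  | j + 1 => by simpa [List.replicate, paR] using pa_rep_true_f j

theorem Sec_rep_true : ∀ j, Sec (List.replicate j true) = (List.replicate j false, [])
  | 0 => rfl
  | j + 1 => by simp [List.replicate, Sec, Sec_rep_true j]

theorem Sec_rep_false : ∀ j, Sec (List.replicate j false) =
    (List.replicate ((j + 1) / 2) true, List.replicate (j / 2) true)
  | 0 => rfl
  | j + 1 => by
      rw [List.replicate_succ]
      simp only [Sec, Sec_rep_false j]
      have h1 : (j + 1 + 1) / 2 = j / 2 + 1 := by omega
      rw [h1, List.replicate_succ]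

theorem SecInj : ∀ r1 r2 : List Bool, Sec r1 = Sec r2 → r1 = r2
  | [], r2, h => ((Sec1_nil_iff r2).mp (congrArg Prod.fst h).symm).symm
  | r1, [], h => (Sec1_nil_iff r1).mp (congrArg Prod.fst h)
  | false :: r1, false :: r2, h => by
      simp only [Sec, Prod.mk.injEq, List.cons.injEq, true_and] at h
      rw [SecInj r1 r2 (Prod.ext h.2 h.1)]
  | true :: r1, true :: r2, h => by
      simp only [Sec, Prod.mk.injEq, List.cons.injEq, true_and] at h
      rw [SecInj r1 r2 (Prod.ext h.1 h.2)]
  | false :: r1, true :: r2, h => by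
      simp only [Sec, Prod.mk.injEq, List.cons.injEq] at h
      exact absurd h.1.1 (by simp)
  | true :: r1, false :: r2, h => by
      simp only [Sec, Prod.mk.injEq, List.cons.injEq] at h
      exact absurd h.1.1 (by simp)

/-- `b` powers: the function determines the exponent. -/
theorem Gb : ∀ n j k, j + k ≤ n →
    (∀ w, Gw (List.replicate j true) w = Gw (List.replicate k true) w) → j = k := by
  intro n
  induction n with
  | zero => intro j k hn _; omega
  | succ n ih =>
    intro j k hn h
    by_cases hjk : j = k
    · exact hjk
    -- pass to the x-sections: a^j
    have ha : ∀ w, Gw (List.replicate j false) w = Gw (List.replicate k false) w := by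
      have := eq_sec1 h
      rwa [Sec_rep_true, Sec_rep_true] at this
    have hfloor : ∀ w, Gw (List.replicate (j / 2) true) w
        = Gw (List.replicate (k / 2) true) w := by
      have := eq_sec2 ha
      rwa [Sec_rep_false, Sec_rep_false] at this
    have hceil : ∀ w, Gw (List.replicate ((j + 1) / 2) true) w
        = Gw (List.replicate ((k + 1) / 2) true) w := by
      have := eq_sec1 ha
      rwa [Sec_rep_false, Sec_rep_false] at this
    by_cases hsmall : j ≤ 1 ∧ k ≤ 1
    · -- then {j,k} = {0,1}: direct contradiction
      exfalso
      obtain ⟨hj1, hk1⟩ := hsmall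
      have h2 := h [false, false]
      interval_cases j <;> interval_cases k <;>
        first
          | exact hjk rfl
          | exact absurd h2 (by decide)
    · have e1 : j / 2 = k / 2 := ih _ _ (by omega) hfloor
      have e2 : (j + 1) / 2 = (k + 1) / 2 := ih _ _ (by omega) hceil
      omega

theorem Ginj : ∀ n (r1 r2 : List Bool), r1.length + r2.length ≤ n →
    (∀ w, Gw r1 w = Gw r2 w) → r1 = r2 := by
  intro n
  induction n with
  | zero =>
    intro r1 r2 hn _
    rw [List.length_eq_zero_iff.mp (by omega : r1.length = 0),
        List.length_eq_zero_iff.mp (by omega : r2.length = 0)]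
  | succ n ih =>
    intro r1 r2 hn h
    by_cases hr : r1 = [] ∧ r2 = []
    · rw [hr.1, hr.2]
    have hpa := eq_pa h
    have hp := eq_sec1 h
    have hq := eq_sec2 h
    by_cases hq0 : (Sec r1).2 = [] ∧ (Sec r2).2 = []
    · -- both words are of the form b^j or b^j ++ [a]
      obtain ⟨j1, h1⟩ := Qchar r1 hq0.1
      obtain ⟨j2, h2⟩ := Qchar r2 hq0.2
      rcases h1 with h1 | h1 <;> rcases h2 with h2 | h2
      · subst h1; subst h2
        rw [Gb (j1 + j2) j1 j2 le_rfl h]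
      · exfalso; rw [h1, h2, pa_rep_true, pa_rep_true_f] at hpa; simp at hpa
      · exfalso; rw [h1, h2, pa_rep_true_f, pa_rep_true] at hpa; simp at hpa
      · subst h1; subst h2
        have h' : ∀ w, Gw (List.replicate j1 true) w = Gw (List.replicate j2 true) w := by
          intro w
          have := h w
          rw [Gw_append, Gw_append] at this
          have := congrArg aInv this
          simpa [Gw, aInv_aFun] using this
        rw [Gb (j1 + j2) j1 j2 le_rfl h']
    · -- general branch: both sections strictly shorter, recurse
      have hL1 := Sec_len r1
      have hL2 := Sec_len r2
      have hp1 : (Sec r1).1.length + (Sec r2).1.length ≤ n := by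
        have hy : (Sec r1).2.length + (Sec r2).2.length ≥ 1 := by
          rcases not_and_or.mp hq0 with hne | hne
          · have := List.length_pos_iff.mpr hne; omega
          · have := List.length_pos_iff.mpr hne; omega
        omega
      have hq1 : (Sec r1).2.length + (Sec r2).2.length ≤ n := by
        have hx : (Sec r1).1.length + (Sec r2).1.length ≥ 1 := by
          rcases not_and_or.mp hr with hne | hne
          · have : (Sec r1).1 ≠ [] := fun hh => hne ((Sec1_nil_iff r1).mp hh)
            have := List.length_pos_iff.mpr this; omega
          · have : (Sec r2).1 ≠ [] := fun hh => hne ((Sec1_nil_iff r2).mp hh)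
            have := List.length_pos_iff.mpr this; omega
        omega
      have e1 := ih (Sec r1).1 (Sec r2).1 hp1 hp
      have e2 := ih (Sec r1).2 (Sec r2).2 hq1 hq
      exact SecInj r1 r2 (Prod.ext e1 e2)

/-- Bridge: the action of the product of a word of generators is `Gw` on the
reversed word. -/
theorem word_prod_apply : ∀ (u : List Bool) (w : List Bool),
    (((u.map fun t => cond t B A).prod : treeAut) : Equiv.Perm (List Bool)) w
      = Gw u.reverse w
  | [], w => rfl
  | l :: t, w => by
      have : ((((l :: t).map fun t => cond t B A).prod : treeAut) : Equiv.Perm (List Bool)) w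
          = ((cond l B A : treeAut) : Equiv.Perm (List Bool))
            ((((t.map fun t => cond t B A).prod : treeAut) : Equiv.Perm (List Bool)) w) := rfl
      rw [this, word_prod_apply t w, List.reverse_cons, Gw_append]
      cases l <;> rfl

/-- the subsemigroup of `G` generated by `a` and `b` is free of rank 2:
two words over the alphabet `{a, b}` (encoded as lists of booleans, `false ↦ a`,
`true ↦ b`) with equal products in `G` are equal. -/
theorem free_monoid (u v : List Bool)
    (h : (u.map fun t => cond t B A).prod = (v.map fun t => cond t B A).prod) : u = v := by
  have hw : ∀ w, Gw u.reverse w = Gw v.reverse w := by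
    intro w
    rw [← word_prod_apply u w, ← word_prod_apply v w, h]
  have := Ginj (u.reverse.length + v.reverse.length) u.reverse v.reverse le_rfl hw
  simpa using congrArg List.reverse this
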